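/- arXiv:2409.07099 — 2 statements merged into one kernel-verified Lean document; each statement's English description precedes it below -/
import Mathlib

section
/- If G has m ≥ 1 edges, M₁ denotes the minimum of the d-radii of the edges of G, R_g the geometric mean of the d-radii, and σ² = (1/m) Σ_{uv ∈ E(G)} (|z_{uv}| − SO(G)/m)² the variance of the d-radii, then SO(G) ≤ m·(R_g + σ²/(2M₁)). -/
/-! Let `A = SO(G)/m` be the arithmetic mean of the d-radii, all of which are `≥ M₁ > 0`. For
`x ≥ M₁` the tangent-line bound of the concave `log` at `A` can be corrected by a quadratic term:
`log x ≥ log A + (x - A)/A - (x - A)²/(2 M₁ A)`, because the difference of the two sides has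
derivative `(x - A)(x - M₁)/(x M₁ A)` and so is minimal at `x = A`. Averaging over the edges kills
the linear terms, giving `log R_g ≥ log A - c` with `c = σ²/(2 M₁ A)`, hence
`R_g ≥ A e^{-c} ≥ A (1 - c) = A - σ²/(2 M₁)`. -/

open Finset Real

noncomputable def dRad {V : Type*} [Fintype V] (G : SimpleGraph V) [DecidableRel G.Adj]
    (e : Sym2 V) : ℝ :=
  Sym2.lift ⟨fun u v => Real.sqrt ((G.degree u : ℝ) ^ 2 + (G.degree v : ℝ) ^ 2),
    fun u v => by simp [add_comm]⟩ e

noncomputable def somborIndex {V : Type*} [Fintype V] [DecidableEq V] (G : SimpleGraph V)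
    [DecidableRel G.Adj] : ℝ :=
  ∑ e ∈ G.edgeFinset, dRad G e

lemma hasDerivAt_log_sub_add_sq_div {μ t : ℝ} (hμ : 0 < μ) (ht : 0 < t) :
    HasDerivAt (fun t => log t - (t - 1) + (t - 1) ^ 2 / (2 * μ))
      ((t - 1) * (t - μ) / (μ * t)) t := by
  have h := (((hasDerivAt_log ht.ne').sub ((hasDerivAt_id t).sub_const 1)).add
    ((((hasDerivAt_id t).sub_const 1).pow 2).div_const (2 * μ)))
  refine h.congr_deriv ?_
  simp only [id, Nat.cast_ofNat]
  field_simp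
  ring

lemma sub_one_sub_sq_div_le_log {μ t : ℝ} (hμ : 0 < μ) (hμ1 : μ ≤ 1) (ht : μ ≤ t) :
    t - 1 - (t - 1) ^ 2 / (2 * μ) ≤ log t := by
  set F : ℝ → ℝ := fun t => log t - (t - 1) + (t - 1) ^ 2 / (2 * μ)
  set F' : ℝ → ℝ := fun s => (s - 1) * (s - μ) / (μ * s)
  have hF : ∀ s, μ ≤ s → HasDerivAt F (F' s) s := fun s hs =>
    hasDerivAt_log_sub_add_sq_div hμ (hμ.trans_le hs)
  have hcont : ∀ D ⊆ Set.Ici μ, ContinuousOn F D := fun D hD s hs =>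
    (hF s (hD hs)).continuousAt.continuousWithinAt
  suffices F 1 ≤ F t by simp [F] at this; linarith
  rcases le_total t 1 with ht1 | ht1
  · refine antitoneOn_of_hasDerivWithinAt_nonpos (f' := F') (convex_Icc μ 1)
      (hcont _ Set.Icc_subset_Ici_self) (fun s hs => ?_) (fun s hs => ?_)
      ⟨ht, ht1⟩ ⟨hμ1, le_rfl⟩ ht1
    all_goals rw [interior_Icc] at hs
    · exact (hF s hs.1.le).hasDerivWithinAt
    · exact div_nonpos_of_nonpos_of_nonneg
        (mul_nonpos_of_nonpos_of_nonneg (by linarith [hs.2]) (by linarith [hs.1]))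
        (by nlinarith [hs.1])
  · refine monotoneOn_of_hasDerivWithinAt_nonneg (f' := F') (convex_Ici 1)
      (hcont _ (Set.Ici_subset_Ici.2 hμ1)) (fun s hs => ?_) (fun s hs => ?_)
      Set.self_mem_Ici ht1 ht1
    all_goals rw [interior_Ici] at hs
    · exact (hF s (hμ1.trans hs.out.le)).hasDerivWithinAt
    · have hs1 : 1 < s := hs
      exact div_nonneg (mul_nonneg (by linarith) (by linarith)) (by positivity)

lemma log_add_sub_div_sub_sq_div_le_log {M A x : ℝ} (hM : 0 < M) (hMA : M ≤ A) (hx : M ≤ x) :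
    log A + (x - A) / A - (x - A) ^ 2 / (2 * M * A) ≤ log x := by
  have hA : 0 < A := hM.trans_le hMA
  have h := sub_one_sub_sq_div_le_log (div_pos hM hA) ((div_le_one hA).2 hMA)
    (div_le_div_of_nonneg_right hx hA.le)
  rw [log_div (hM.trans_le hx).ne' hA.ne'] at h
  have hx1 : x / A - 1 = (x - A) / A := by field_simp
  have hsq : (x - A) ^ 2 / (2 * M * A) = (x / A - 1) ^ 2 / (2 * (M / A)) := by
    rw [hx1]; field_simp
  rw [hsq, ← hx1]
  linarith

lemma sum_sub_mean_eq_zero {ι : Type*} (s : Finset ι) (hs : s.Nonempty) (x : ι → ℝ) :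
    ∑ i ∈ s, (x i - (∑ j ∈ s, x j) / #s) = 0 := by
  have hn : (#s : ℝ) ≠ 0 := by simp [hs.ne_empty]
  rw [sum_sub_distrib, sum_const, nsmul_eq_mul, mul_div_cancel₀ _ hn, sub_self]

theorem mean_le_geomMean_add_variance_div {ι : Type*} (s : Finset ι) (hs : s.Nonempty)
    (x : ι → ℝ) {M : ℝ} (hM : 0 < M) (hx : ∀ i ∈ s, M ≤ x i) :
    (∑ i ∈ s, x i) / #s ≤ (∏ i ∈ s, x i) ^ ((1 : ℝ) / #s)
      + ((1 / #s) * ∑ i ∈ s, (x i - (∑ i ∈ s, x i) / #s) ^ 2) / (2 * M) := by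
  set n : ℝ := (#s : ℝ)
  set A := (∑ i ∈ s, x i) / n
  set V := ∑ i ∈ s, (x i - A) ^ 2
  have hn : 0 < n := by simpa [n] using hs.card_pos
  have hxpos : ∀ i ∈ s, 0 < x i := fun i hi => hM.trans_le (hx i hi)
  have hMA : M ≤ A := by
    rw [le_div_iff₀ hn, mul_comm]
    simpa [n] using card_nsmul_le_sum s x M hx
  have hA : 0 < A := hM.trans_le hMA
  have hsumLog : n * log A - V / (2 * M * A) ≤ ∑ i ∈ s, log (x i) := by
    calc n * log A - V / (2 * M * A)
        = ∑ i ∈ s, (log A + (x i - A) / A - (x i - A) ^ 2 / (2 * M * A)) := by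
          rw [sum_sub_distrib, sum_add_distrib, ← sum_div, ← sum_div,
            sum_sub_mean_eq_zero s hs x, sum_const, nsmul_eq_mul]
          ring
      _ ≤ ∑ i ∈ s, log (x i) :=
          sum_le_sum fun i hi => log_add_sub_div_sub_sq_div_le_log hM hMA (hx i hi)
  set c := V / n / (2 * M * A)
  have hgeom : (∏ i ∈ s, x i) ^ ((1 : ℝ) / n) = exp ((1 / n) * ∑ i ∈ s, log (x i)) := by
    rw [rpow_def_of_pos (prod_pos hxpos), log_prod fun i hi => (hxpos i hi).ne', mul_comm]
  have hlogGeom : log A - c ≤ (1 / n) * ∑ i ∈ s, log (x i) := by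
    calc log A - c = (1 / n) * (n * log A - V / (2 * M * A)) := by
          simp only [c]
          field_simp
      _ ≤ (1 / n) * ∑ i ∈ s, log (x i) := by gcongr
  have hGlb : A - A * c ≤ (∏ i ∈ s, x i) ^ ((1 : ℝ) / n) := by
    calc A - A * c = A * (-c + 1) := by ring
      _ ≤ A * exp (-c) := mul_le_mul_of_nonneg_left (add_one_le_exp (-c)) hA.le
      _ = exp (log A - c) := by rw [exp_sub, exp_log hA, exp_neg, div_eq_mul_inv]
      _ ≤ _ := hgeom ▸ exp_le_exp.2 hlogGeom
  have hAc : A * c = (1 / n * V) / (2 * M) := by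
    simp only [c]
    field_simp
  linarith

lemma dRad_pos {V : Type*} [Fintype V] (G : SimpleGraph V) [DecidableRel G.Adj]
    {e : Sym2 V} (he : e ∈ G.edgeFinset) : 0 < dRad G e := by
  induction e using Sym2.ind with
  | _ u v =>
    rw [SimpleGraph.mem_edgeFinset, SimpleGraph.mem_edgeSet] at he
    have hu : 0 < G.degree u := G.degree_pos_iff_exists_adj u |>.2 ⟨v, he⟩
    simpa [dRad] using Real.sqrt_pos.2 (by positivity)

theorem stmt6_general {V : Type*} [Fintype V] [DecidableEq V] (G : SimpleGraph V) [DecidableRel G.Adj]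
    (m : ℕ) (hm : G.edgeFinset.card = m) (M₁ : ℝ)
    (hlb : ∀ e ∈ G.edgeFinset, M₁ ≤ dRad G e)
    (hmem : ∃ e ∈ G.edgeFinset, dRad G e = M₁) :
    somborIndex G ≤
      (m : ℝ) * ((∏ e ∈ G.edgeFinset, dRad G e) ^ ((1 : ℝ) / m)
        + ((1 / m) * ∑ e ∈ G.edgeFinset, (dRad G e - somborIndex G / m) ^ 2) / (2 * M₁)) := by
  obtain ⟨e₀, he₀, rfl⟩ := hmem
  have hs : G.edgeFinset.Nonempty := ⟨e₀, he₀⟩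
  have hm0 : (0 : ℝ) < m := by exact_mod_cast hm ▸ hs.card_pos
  have key := mean_le_geomMean_add_variance_div G.edgeFinset hs (dRad G) (dRad_pos G he₀) hlb
  rw [hm] at key
  rwa [div_le_iff₀' hm0] at key

/-- If `G` has `m ≥ 1` edges, `M₁` is the minimum of the d-radii, `R_g` the geometric mean of
the d-radii and `σ²` their variance, then `SO(G) ≤ m·(R_g + σ²/(2M₁))`. -/
theorem stmt6 {V : Type*} [Fintype V] [DecidableEq V] (G : SimpleGraph V) [DecidableRel G.Adj]
    (m : ℕ) (hm : G.edgeFinset.card = m) (h1 : 1 ≤ m) (M₁ : ℝ)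
    (hlb : ∀ e ∈ G.edgeFinset, M₁ ≤ dRad G e)
    (hmem : ∃ e ∈ G.edgeFinset, dRad G e = M₁) :
    somborIndex G ≤
      (m : ℝ) * ((∏ e ∈ G.edgeFinset, dRad G e) ^ ((1 : ℝ) / m)
        + ((1 / m) * ∑ e ∈ G.edgeFinset, (dRad G e - somborIndex G / m) ^ 2) / (2 * M₁)) :=
  stmt6_general G m hm M₁ hlb hmem
end

section
/- If G has m ≥ 2 edges, R_g denotes the geometric mean of the d-radii of the edges of G, and σ denotes the standard deviation of the d-radii, i.e. σ = √((1/m) Σ_{uv ∈ E(G)} (|z_{uv}| − SO(G)/m)²), then SO(G) ≤ m·(R_g + √(m−1)·σ). -/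
open Finset Real

/-!
The mean of finitely many nonnegative reals exceeds their minimum by at most `√(m-1)·σ`
(Samuelson's inequality: Cauchy–Schwarz applied to the other `m - 1` deviations from the mean,
which sum to minus the deviation of the minimum), and the minimum is at most the geometric mean.
Applied to the d-radii this gives `SO(G)/m ≤ R_g + √(m-1)·σ`.
-/

namespace Finset

variable {ι : Type*} {s : Finset ι} {f : ι → ℝ}

theorem card_mul_sq_le_of_sum_eq_zero {g : ι → ℝ} (hg : ∑ b ∈ s, g b = 0) {a : ι}
    (ha : a ∈ s) : #s * g a ^ 2 ≤ (#s - 1) * ∑ b ∈ s, g b ^ 2 := by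
  classical
  have hrest : ∑ b ∈ s.erase a, g b = -g a := by
    rw [sum_erase_eq_sub ha, hg]; ring
  have hcs := sq_sum_le_card_mul_sum_sq (s := s.erase a) (f := g)
  rw [hrest, neg_sq, card_erase_of_mem ha, sum_erase_eq_sub ha,
    Nat.cast_pred (card_pos.2 ⟨a, ha⟩)] at hcs
  nlinarith

theorem sum_sub_mean_eq_zero (hs : s.Nonempty) :
    ∑ b ∈ s, (f b - (∑ c ∈ s, f c) / #s) = 0 := by
  have : (#s : ℝ) ≠ 0 := by exact_mod_cast hs.card_ne_zero
  rw [sum_sub_distrib, sum_const, nsmul_eq_mul, mul_div_cancel₀ _ this, sub_self]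

theorem mean_sub_le_sqrt_card_sub_one_mul_stdDev {a : ι} (ha : a ∈ s) :
    (∑ b ∈ s, f b) / #s - f a ≤
      √(#s - 1) * √((1 / #s) * ∑ b ∈ s, (f b - (∑ c ∈ s, f c) / #s) ^ 2) := by
  have hcard : (1 : ℝ) ≤ #s := by exact_mod_cast card_pos.2 ⟨a, ha⟩
  have hsam := card_mul_sq_le_of_sum_eq_zero (sum_sub_mean_eq_zero (f := f) ⟨a, ha⟩) ha
  set μ := (∑ c ∈ s, f c) / #s
  have hsq : (f a - μ) ^ 2 ≤ (#s - 1) * ((1 / #s) * ∑ b ∈ s, (f b - μ) ^ 2) := by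
    rw [one_div_mul_eq_div, mul_div_assoc', le_div_iff₀ (by linarith)]
    linarith
  calc μ - f a ≤ |f a - μ| := by rw [abs_sub_comm]; exact le_abs_self _
    _ = √((f a - μ) ^ 2) := (sqrt_sq_eq_abs _).symm
    _ ≤ √((#s - 1) * ((1 / #s) * ∑ b ∈ s, (f b - μ) ^ 2)) := sqrt_le_sqrt hsq
    _ = √(#s - 1) * √((1 / #s) * ∑ b ∈ s, (f b - μ) ^ 2) := sqrt_mul (by linarith) _

theorem le_prod_rpow_one_div_card {c : ℝ} (hs : s.Nonempty) (hc : 0 ≤ c)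
    (hcf : ∀ b ∈ s, c ≤ f b) : c ≤ (∏ b ∈ s, f b) ^ ((1 : ℝ) / #s) := by
  have hpow : c ^ #s ≤ ∏ b ∈ s, f b := by
    simpa only [prod_const] using prod_le_prod (fun _ _ => hc) hcf
  calc c = (c ^ #s) ^ ((1 : ℝ) / #s) := by rw [one_div, pow_rpow_inv_natCast hc hs.card_ne_zero]
    _ ≤ (∏ b ∈ s, f b) ^ ((1 : ℝ) / #s) := by gcongr

theorem sum_le_card_mul_geomMean_add_stdDev (hf : ∀ b ∈ s, 0 ≤ f b) :
    ∑ b ∈ s, f b ≤ #s * ((∏ b ∈ s, f b) ^ ((1 : ℝ) / #s) +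
      √(#s - 1) * √((1 / #s) * ∑ b ∈ s, (f b - (∑ c ∈ s, f c) / #s) ^ 2)) := by
  obtain rfl | hs := s.eq_empty_or_nonempty
  · simp
  obtain ⟨a, ha, hmin⟩ := s.exists_min_image f hs
  have hcard : (0 : ℝ) < #s := by exact_mod_cast hs.card_pos
  rw [← div_le_iff₀' hcard]
  linarith [mean_sub_le_sqrt_card_sub_one_mul_stdDev (f := f) ha,
    le_prod_rpow_one_div_card hs (hf a ha) hmin]

end Finset

theorem dRad_nonneg {V : Type*} [Fintype V] (G : SimpleGraph V) [DecidableRel G.Adj]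
    (e : Sym2 V) : 0 ≤ dRad G e := by
  induction e using Sym2.ind with
  | _ u v => exact sqrt_nonneg _

theorem stmt8_general {V : Type*} [Fintype V] [DecidableEq V] (G : SimpleGraph V) [DecidableRel G.Adj]
    (m : ℕ) (hm : G.edgeFinset.card = m) :
    somborIndex G ≤
      (m : ℝ) * ((∏ e ∈ G.edgeFinset, dRad G e) ^ ((1 : ℝ) / m)
        + Real.sqrt ((m : ℝ) - 1) *
            Real.sqrt ((1 / m) * ∑ e ∈ G.edgeFinset, (dRad G e - somborIndex G / m) ^ 2)) := by
  subst hm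
  exact sum_le_card_mul_geomMean_add_stdDev fun e _ => dRad_nonneg G e

/-- If `G` has `m ≥ 2` edges, `R_g` is the geometric mean of the d-radii and `σ` their standard
deviation, then `SO(G) ≤ m·(R_g + √(m−1)·σ)`. -/
theorem stmt8 {V : Type*} [Fintype V] [DecidableEq V] (G : SimpleGraph V) [DecidableRel G.Adj]
    (m : ℕ) (hm : G.edgeFinset.card = m) (h2 : 2 ≤ m) :
    somborIndex G ≤
      (m : ℝ) * ((∏ e ∈ G.edgeFinset, dRad G e) ^ ((1 : ℝ) / m)
        + Real.sqrt ((m : ℝ) - 1) *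
            Real.sqrt ((1 / m) * ∑ e ∈ G.edgeFinset, (dRad G e - somborIndex G / m) ^ 2)) :=
  stmt8_general G m hm
end
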